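/- arXiv:math/0307357 — 2 statements merged into one kernel-verified Lean document; each statement's English description precedes it below -/
import Mathlib

section
/- Let M₀ be a nonnegative m×n matrix and k ≤ min(m,n). Define M_{i+1} as the reduction of M_i by the column-maximal optimal cover of the zeros of M_i. Then for some i, the matrix M_i has a zero-cost k-assignment. -/
open Finset

variable {m n : ℕ}

/-- A set of sites is independent (an assignment) if no two of its sites share
a row or a column. -/
def Indep (π : Finset (Fin m × Fin n)) : Prop :=
  ∀ p ∈ π, ∀ q ∈ π, p ≠ q → p.1 ≠ q.1 ∧ p.2 ≠ q.2

/-- The cost of a set of sites in the matrix `M`. -/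
def cost (M : Fin m → Fin n → ℝ) (π : Finset (Fin m × Fin n)) : ℝ :=
  ∑ p ∈ π, M p.1 p.2

/-- `π` is an optimal `k`-assignment in `M`. -/
def IsOptAssign (M : Fin m → Fin n → ℝ) (k : ℕ) (π : Finset (Fin m × Fin n)) : Prop :=
  Indep π ∧ π.card = k ∧
    ∀ σ : Finset (Fin m × Fin n), Indep σ → σ.card = k → cost M π ≤ cost M σ

/-- The set of files consisting of the rows `X` and the columns `Y` covers `Z`. -/
def Covers (X : Finset (Fin m)) (Y : Finset (Fin n)) (Z : Finset (Fin m × Fin n)) : Prop :=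
  ∀ p ∈ Z, p.1 ∈ X ∨ p.2 ∈ Y

/-- `(X, Y)` is a minimum-size cover of `Z`. -/
def IsOptCover (Z : Finset (Fin m × Fin n)) (X : Finset (Fin m)) (Y : Finset (Fin n)) : Prop :=
  Covers X Y Z ∧ ∀ (X' : Finset (Fin m)) (Y' : Finset (Fin n)),
    Covers X' Y' Z → X.card + Y.card ≤ X'.card + Y'.card

open scoped Classical

/-- The set of zeros of a matrix. -/
noncomputable def zeroSet (M : Fin m → Fin n → ℝ) : Finset (Fin m × Fin n) :=
  Finset.univ.filter (fun p => M p.1 p.2 = 0)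

/-- `(X, Y)` is the column-maximal optimal cover of `Z`: a minimum-size cover
containing every column belonging to some minimum-size cover. -/
def ColMaxOptCover (Z : Finset (Fin m × Fin n))
    (X : Finset (Fin m)) (Y : Finset (Fin n)) : Prop :=
  IsOptCover Z X Y ∧ ∀ (j : Fin n) (X' : Finset (Fin m)) (Y' : Finset (Fin n)),
    IsOptCover Z X' Y' → j ∈ Y' → j ∈ Y

/-- `B` is the reduction of `A` by the column-maximal optimal cover of the
zeros of `A`. -/
def Reduces (A B : Fin m → Fin n → ℝ) : Prop :=
  ∃ (X : Finset (Fin m)) (Y : Finset (Fin n)) (t : ℝ),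
    ColMaxOptCover (zeroSet A) X Y ∧
    IsLeast {x : ℝ | ∃ i j, i ∉ X ∧ j ∉ Y ∧ A i j = x} t ∧
    ∀ i j, B i j =
      if i ∈ X then (if j ∈ Y then A i j + t else A i j)
      else (if j ∈ Y then A i j else A i j - t)

/-!
Let `ρ(A)` be the size of a minimum cover of the zeros of `A`. By König's theorem the zeros of `A`
contain an independent set of size `ρ(A)` avoiding the doubly covered sites, so `ρ(A) < k` as long
as there is no zero-cost `k`-assignment. A reduction keeps every zero that is not doubly covered,
hence `ρ` never decreases. If it stays the same, the covers `(X ∩ X', Y ∪ Y')` and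
`(X ∪ X', Y ∩ Y')` built from the old cover `(X, Y)` and the new one `(X', Y')` show that the former
is again optimal, so column-maximality gives `Y' ⊆ Y`; and the zero created at the minimum
uncovered entry forbids `X' = X`. Thus `(ρ, |X|)` increases lexicographically at every step, while
staying in a finite set.
-/

open Finset

section Covers

variable {Z : Finset (Fin m × Fin n)} {X X' : Finset (Fin m)} {Y Y' : Finset (Fin n)}

theorem Covers.mono {Z' : Finset (Fin m × Fin n)} (h : Covers X Y Z) (hZ : Z' ⊆ Z) :
    Covers X Y Z' :=
  fun p hp => h p (hZ hp)

theorem Indep.mono {I J : Finset (Fin m × Fin n)} (hI : Indep I) (hJ : J ⊆ I) : Indep J :=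
  fun p hp q hq => hI p (hJ hp) q (hJ hq)

theorem Indep.union {I J : Finset (Fin m × Fin n)} (hI : Indep I) (hJ : Indep J)
    (hIJ : ∀ p ∈ I, ∀ q ∈ J, p.1 ≠ q.1 ∧ p.2 ≠ q.2) : Indep (I ∪ J) := by
  intro p hp q hq hpq
  rcases mem_union.mp hp with hp | hp <;> rcases mem_union.mp hq with hq | hq
  · exact hI p hp q hq hpq
  · exact hIJ p hp q hq
  · exact (hIJ q hq p hp).imp Ne.symm Ne.symm
  · exact hJ p hp q hq hpq

theorem indep_image_of_injective {ι : Type*} [DecidableEq ι] (s : Finset ι) {r : ι → Fin m}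
    {c : ι → Fin n} (hr : Function.Injective r) (hc : Function.Injective c) :
    Indep (s.image fun a => (r a, c a)) := by
  simp only [Indep, mem_image]
  rintro _ ⟨a, -, rfl⟩ _ ⟨b, -, rfl⟩ hab
  have hab : a ≠ b := fun h => hab (h ▸ rfl)
  exact ⟨hr.ne hab, hc.ne hab⟩

theorem Indep.card_le_of_covers {I : Finset (Fin m × Fin n)} (hI : Indep I) (hc : Covers X Y I) :
    I.card ≤ X.card + Y.card := by
  let f : Fin m × Fin n → Fin m ⊕ Fin n := fun p => if p.1 ∈ X then .inl p.1 else .inr p.2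
  have hf : Set.MapsTo f I (X.disjSum Y) := by
    intro p hp
    by_cases h : p.1 ∈ X
    · simp [f, h]
    · simp [f, h, (hc p hp).resolve_left h]
  have hinj : Set.InjOn f I := by
    intro p hp q hq hpq
    by_contra hne
    have := hI p hp q hq hne
    by_cases h₁ : p.1 ∈ X <;> by_cases h₂ : q.1 ∈ X <;> simp_all [f]
  simpa using card_le_card_of_injOn f hf hinj

theorem IsOptCover.swap (h : IsOptCover Z X Y) : IsOptCover (Z.image Prod.swap) Y X := by
  refine ⟨?_, fun Y' X' hc => ?_⟩
  · simp only [Covers, mem_image]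
    rintro _ ⟨q, hq, rfl⟩
    exact (h.1 q hq).symm
  · have := h.2 X' Y' fun q hq => (hc q.swap (mem_image_of_mem _ hq)).symm
    omega

theorem IsOptCover.exists_row_matching (h : IsOptCover Z X Y) :
    ∃ f : X → Fin n, Function.Injective f ∧ ∀ i, (i.1, f i) ∈ Z ∧ f i ∉ Y := by
  let N : X → Finset (Fin n) := fun i => univ.filter fun j => (i.1, j) ∈ Z ∧ j ∉ Y
  suffices hall : ∀ S : Finset X, S.card ≤ (S.biUnion N).card by
    obtain ⟨f, hf, hfN⟩ := (all_card_le_biUnion_card_iff_exists_injective N).mp hall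
    exact ⟨f, hf, fun i => by simpa [N] using hfN i⟩
  -- Hall's condition: otherwise trading the rows `S` for the columns `N(S)` shrinks the cover.
  intro S
  by_contra! hlt
  let R := S.map (Function.Embedding.subtype _)
  have hR : R ⊆ X := by
    rintro _ hi
    obtain ⟨i, -, rfl⟩ := mem_map.mp hi
    exact i.2
  have hcov : Covers (X \ R) (Y ∪ S.biUnion N) Z := by
    intro p hp
    by_cases hpR : p.1 ∈ R
    · obtain ⟨i, hiS, hi⟩ := mem_map.mp hpR
      by_cases hpY : p.2 ∈ Y
      · exact .inr (mem_union_left _ hpY)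
      · refine .inr (mem_union_right _ (mem_biUnion.mpr ⟨i, hiS, ?_⟩))
        simp only [N, mem_filter, mem_univ, true_and]
        exact ⟨by rwa [show i.1 = p.1 from hi], hpY⟩
    · exact (h.1 p hp).imp (fun hpX => mem_sdiff.mpr ⟨hpX, hpR⟩) (mem_union_left _)
  have := h.2 _ _ hcov
  have := card_sdiff_of_subset hR
  have := card_union_le Y (S.biUnion N)
  have := card_le_card hR
  simp only [R, card_map] at *
  omega

theorem IsOptCover.exists_col_matching (h : IsOptCover Z X Y) :
    ∃ g : Y → Fin m, Function.Injective g ∧ ∀ j, (g j, j.1) ∈ Z ∧ g j ∉ X := by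
  obtain ⟨g, hg, hgZ⟩ := h.swap.exists_row_matching
  refine ⟨g, hg, fun j => ⟨?_, (hgZ j).2⟩⟩
  obtain ⟨q, hq, hqj⟩ := mem_image.mp (hgZ j).1
  rwa [← Prod.swap_swap q, hqj] at hq

def singlyCovered (X : Finset (Fin m)) (Y : Finset (Fin n)) (Z : Finset (Fin m × Fin n)) :
    Finset (Fin m × Fin n) :=
  Z.filter fun p => p.1 ∉ X ∨ p.2 ∉ Y

/-- König's theorem. -/
theorem IsOptCover.exists_indep (h : IsOptCover Z X Y) :
    ∃ I, Indep I ∧ I.card = X.card + Y.card ∧ I ⊆ singlyCovered X Y Z := by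
  obtain ⟨f, hf, hfZ⟩ := h.exists_row_matching
  obtain ⟨g, hg, hgZ⟩ := h.exists_col_matching
  let I₁ := X.attach.image fun i => (i.1, f i)
  let I₂ := Y.attach.image fun j => (g j, j.1)
  have hI₁ : ∀ p ∈ I₁, p ∈ Z ∧ p.1 ∈ X ∧ p.2 ∉ Y := by
    simp only [I₁, mem_image]
    rintro _ ⟨i, -, rfl⟩
    exact ⟨(hfZ i).1, i.2, (hfZ i).2⟩
  have hI₂ : ∀ p ∈ I₂, p ∈ Z ∧ p.1 ∉ X ∧ p.2 ∈ Y := by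
    simp only [I₂, mem_image]
    rintro _ ⟨j, -, rfl⟩
    exact ⟨(hgZ j).1, (hgZ j).2, j.2⟩
  have hdisj : Disjoint I₁ I₂ :=
    disjoint_left.mpr fun p hp₁ hp₂ => (hI₂ p hp₂).2.1 (hI₁ p hp₁).2.1
  have hcard₁ : I₁.card = X.card := by
    rw [card_image_of_injective _ fun a b hab => Subtype.val_injective (congrArg Prod.fst hab),
      card_attach]
  have hcard₂ : I₂.card = Y.card := by
    rw [card_image_of_injective _ fun a b hab => Subtype.val_injective (congrArg Prod.snd hab),
      card_attach]
  refine ⟨I₁ ∪ I₂, ?_, by rw [card_union_of_disjoint hdisj, hcard₁, hcard₂], ?_⟩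
  · refine (indep_image_of_injective _ Subtype.val_injective hf).union
      (indep_image_of_injective _ hg Subtype.val_injective) fun p hp q hq => ?_
    obtain ⟨-, hp₁, hp₂⟩ := hI₁ p hp
    obtain ⟨-, hq₁, hq₂⟩ := hI₂ q hq
    exact ⟨fun he => hq₁ (he ▸ hp₁), fun he => hp₂ (he ▸ hq₂)⟩
  · intro p hp
    rcases mem_union.mp hp with hp | hp
    · exact mem_filter.mpr ⟨(hI₁ p hp).1, .inr (hI₁ p hp).2.2⟩
    · exact mem_filter.mpr ⟨(hI₂ p hp).1, .inl (hI₂ p hp).2.1⟩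

theorem IsOptCover.inter_union (h : IsOptCover Z X Y) (h' : Covers X' Y' (singlyCovered X Y Z))
    (hcard : X'.card + Y'.card ≤ X.card + Y.card) : IsOptCover Z (X ∩ X') (Y ∪ Y') := by
  have hsingly : ∀ p ∈ Z, p.1 ∉ X ∨ p.2 ∉ Y → p.1 ∈ X' ∨ p.2 ∈ Y' :=
    fun p hp hp' => h' p (mem_filter.mpr ⟨hp, hp'⟩)
  have hcov₁ : Covers (X ∪ X') (Y ∩ Y') Z := by
    intro p hp
    by_cases hpX : p.1 ∈ X
    · exact .inl (mem_union_left _ hpX)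
    · have hpY := (h.1 p hp).resolve_left hpX
      exact (hsingly p hp (.inl hpX)).imp (mem_union_right _) (mem_inter_of_mem hpY)
  have hcov₂ : Covers (X ∩ X') (Y ∪ Y') Z := by
    intro p hp
    by_cases hpY : p.2 ∈ Y
    · exact .inr (mem_union_left _ hpY)
    · have hpX := (h.1 p hp).resolve_right hpY
      exact (hsingly p hp (.inr hpY)).imp (mem_inter_of_mem hpX) (mem_union_right _)
  refine ⟨hcov₂, fun X'' Y'' hc => ?_⟩
  have := h.2 _ _ hcov₁
  have := h.2 _ _ hc
  have := card_union_add_card_inter X X'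
  have := card_union_add_card_inter Y Y'
  omega

theorem ColMaxOptCover.subset_of_covers_singlyCovered (h : ColMaxOptCover Z X Y)
    (h' : Covers X' Y' (singlyCovered X Y Z)) (hcard : X'.card + Y'.card ≤ X.card + Y.card) :
    Y' ⊆ Y :=
  fun j hj => h.2 j _ _ (h.1.inter_union h' hcard) (mem_union_right _ hj)

end Covers

section Reduction

variable {A : Fin m → Fin n → ℝ} {X X' : Finset (Fin m)} {Y Y' : Finset (Fin n)} {t : ℝ}

theorem mem_zeroSet {p : Fin m × Fin n} : p ∈ zeroSet A ↔ A p.1 p.2 = 0 := by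
  simp [zeroSet]

def reduceBy (A : Fin m → Fin n → ℝ) (X : Finset (Fin m)) (Y : Finset (Fin n)) (t : ℝ) :
    Fin m → Fin n → ℝ := fun i j =>
  if i ∈ X then (if j ∈ Y then A i j + t else A i j)
  else (if j ∈ Y then A i j else A i j - t)

theorem singlyCovered_zeroSet_subset (h : Covers X Y (zeroSet A)) :
    singlyCovered X Y (zeroSet A) ⊆ zeroSet (reduceBy A X Y t) := by
  intro p hp
  obtain ⟨hpA, hp'⟩ := mem_filter.mp hp
  have hA : A p.1 p.2 = 0 := mem_zeroSet.mp hpA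
  rw [mem_zeroSet, reduceBy]
  rcases h p hpA with hX | hY
  · simp [hX, hp'.resolve_left (not_not.mpr hX), hA]
  · simp [hY, hp'.resolve_right (not_not.mpr hY), hA]

theorem mk_mem_zeroSet_reduceBy {i : Fin m} {j : Fin n} (hi : i ∉ X) (hj : j ∉ Y) :
    (i, j) ∈ zeroSet (reduceBy A X Y (A i j)) := by
  rw [mem_zeroSet, reduceBy, if_neg hi, if_neg hj, sub_self]

theorem IsOptCover.card_le_of_reduceBy (hA : IsOptCover (zeroSet A) X Y)
    (hB : IsOptCover (zeroSet (reduceBy A X Y t)) X' Y') :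
    X.card + Y.card ≤ X'.card + Y'.card := by
  obtain ⟨I, hI, hcard, hIZ⟩ := hA.exists_indep
  rw [← hcard]
  exact hI.card_le_of_covers (hB.1.mono (hIZ.trans (singlyCovered_zeroSet_subset hA.1)))

theorem ColMaxOptCover.card_lt_of_reduceBy {i : Fin m} {j : Fin n}
    (hA : ColMaxOptCover (zeroSet A) X Y) (hi : i ∉ X) (hj : j ∉ Y)
    (hB : IsOptCover (zeroSet (reduceBy A X Y (A i j))) X' Y')
    (hcard : X'.card + Y'.card = X.card + Y.card) : X.card < X'.card := by
  have hsingly := hB.1.mono (singlyCovered_zeroSet_subset hA.1.1)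
  have hY' : Y' ⊆ Y := hA.subset_of_covers_singlyCovered hsingly hcard.le
  have := card_le_card hY'
  refine lt_of_le_of_ne (by omega) fun hXX' => ?_
  obtain rfl : Y' = Y := eq_of_subset_of_card_le hY' (by omega)
  -- Then `(X', Y')` is a minimum cover of the zeros of `A` with `i ∈ X'`, so row `i` of `A` has a
  -- zero outside `Y'`, which `(X, Y')` leaves uncovered since `i ∉ X`.
  have hcov : Covers X' Y' (zeroSet A) := by
    intro p hp
    by_cases hp' : p.1 ∉ X ∨ p.2 ∉ Y'
    · exact hsingly p (mem_filter.mpr ⟨hp, hp'⟩)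
    · exact .inr (not_not.mp (not_or.mp hp').2)
  have hopt : IsOptCover (zeroSet A) X' Y' := ⟨hcov, fun X'' Y'' hc => hXX' ▸ hA.1.2 X'' Y'' hc⟩
  have hiX' : i ∈ X' := (hB.1 _ (mk_mem_zeroSet_reduceBy hi hj)).resolve_right hj
  obtain ⟨f, -, hf⟩ := hopt.exists_row_matching
  obtain ⟨hz, hfY⟩ := hf ⟨i, hiX'⟩
  exact (hA.1.1 _ hz).elim hi hfY

theorem ColMaxOptCover.toLex_lt_of_reduceBy {i : Fin m} {j : Fin n}
    (hA : ColMaxOptCover (zeroSet A) X Y) (hi : i ∉ X) (hj : j ∉ Y)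
    (hB : IsOptCover (zeroSet (reduceBy A X Y (A i j))) X' Y') :
    toLex (X.card + Y.card, X.card) < toLex (X'.card + Y'.card, X'.card) := by
  rw [Prod.Lex.toLex_lt_toLex]
  rcases (hA.1.card_le_of_reduceBy hB).lt_or_eq with hlt | heq
  · exact .inl hlt
  · exact .inr ⟨heq, hA.card_lt_of_reduceBy hi hj hB heq.symm⟩

theorem IsOptCover.card_add_card_lt {k : ℕ} (h : IsOptCover (zeroSet A) X Y)
    (hno : ¬ ∃ π : Finset (Fin m × Fin n), Indep π ∧ π.card = k ∧ cost A π = 0) :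
    X.card + Y.card < k := by
  by_contra! hk
  obtain ⟨I, hI, hcard, hIZ⟩ := h.exists_indep
  obtain ⟨π, hπI, hπ⟩ := exists_subset_card_eq (hcard ▸ hk : k ≤ I.card)
  refine hno ⟨π, hI.mono hπI, hπ, sum_eq_zero fun p hp => ?_⟩
  exact mem_zeroSet.mp (filter_subset _ _ (hIZ (hπI hp)))

end Reduction

theorem reduction_terminates_general
    (k : ℕ)
    (M : ℕ → Fin m → Fin n → ℝ)
    (hstep : ∀ s : ℕ,
      (¬ ∃ π : Finset (Fin m × Fin n), Indep π ∧ π.card = k ∧ cost (M s) π = 0) →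
      Reduces (M s) (M (s + 1))) :
    ∃ (s : ℕ) (π : Finset (Fin m × Fin n)), Indep π ∧ π.card = k ∧ cost (M s) π = 0 := by
  by_contra h
  have hno s : ¬ ∃ π : Finset (Fin m × Fin n), Indep π ∧ π.card = k ∧ cost (M s) π = 0 :=
    fun hs => h ⟨s, hs⟩
  choose X Y t hcov hleast hB using fun s => hstep s (hno s)
  let μ : ℕ → ℕ ×ₗ ℕ := fun s => toLex ((X s).card + (Y s).card, (X s).card)
  have hμ : StrictMono μ := strictMono_nat_of_lt_succ fun s => by
    obtain ⟨i, j, hi, hj, hij⟩ := (hleast s).1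
    have hB' : M (s + 1) = reduceBy (M s) (X s) (Y s) (M s i j) := hij ▸ funext₂ (hB s)
    exact (hcov s).toLex_lt_of_reduceBy hi hj (hB' ▸ (hcov (s + 1)).1)
  have hfin : (Set.range μ).Finite := by
    refine (((Set.finite_Iio k).prod (Set.finite_Iic m)).image toLex).subset ?_
    rintro _ ⟨s, rfl⟩
    exact ⟨_, ⟨Set.mem_Iio.mpr ((hcov s).1.card_add_card_lt (hno s)),
      Set.mem_Iic.mpr (by simpa using card_le_univ (X s))⟩, rfl⟩
  exact Set.infinite_range_of_injective hμ.injective hfin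

/-- iterating reduction by the column-maximal optimal cover
eventually produces a matrix with a zero-cost `k`-assignment. -/
theorem reduction_terminates
    (k : ℕ) (hk1 : 1 ≤ k) (hk : k ≤ min m n)
    (M : ℕ → Fin m → Fin n → ℝ) (hM0 : ∀ i j, 0 ≤ M 0 i j)
    (hstep : ∀ s : ℕ,
      (¬ ∃ π : Finset (Fin m × Fin n), Indep π ∧ π.card = k ∧ cost (M s) π = 0) →
      Reduces (M s) (M (s + 1))) :
    ∃ (s : ℕ) (π : Finset (Fin m × Fin n)), Indep π ∧ π.card = k ∧ cost (M s) π = 0 :=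
  reduction_terminates_general k M hstep
end

section
/- In the weighted urn process on R, for an order ideal I with ∅ ∈ I, R ∉ I, let exit_R(I) be the first set in the process not belonging to I. Then for any i ∈ R, Pr(i ∈ exit_R(I)) = ∑_{X ∈ I, i ∉ X} w(i)·Pr_R(X)/w(∁X). -/
/-!
Condition on the set `X` of balls drawn before `i`. A draw order passing through `X` splits as
`p ++ s` with `p` an ordering of `X` and `s` one of `R \ X`, and `listProb` factors accordingly:
the factor of `p` depends on `s` only through the weight `w(R \ X)` left in the urn. Summing out
`s` gives `Pr_R(X)`; requiring `s` to start with `i` instead multiplies this by the first-draw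
probability `w i / w(R \ X)`. Finally, `i` is drawn while the process is in `I` exactly when the
set drawn before it is some `X ∈ I` with `i ∉ X`.
-/

open Finset

variable {ι : Type*} [DecidableEq ι]

/-- The probability that the urn process draws the balls in the order given by
the list `l`: at each step, each remaining ball is drawn with probability
proportional to its weight. -/
noncomputable def listProb (w : ι → ℝ) : List ι → ℝ
  | [] => 1
  | i :: l => w i / ((i :: l).map w).sum * listProb w l

/-- `urnPr w R X` is the probability that at some point of the urn process on
the weighted set `(R, w)` the set of drawn balls is exactly `X`. -/
noncomputable def urnPr (w : ι → ℝ) (R X : Finset ι) : ℝ :=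
  ∑ l ∈ R.toList.permutations.toFinset,
    if (l.take X.card).toFinset = X then listProb w l else 0

/-- `exitProb w R I i` is the probability that ball `i` belongs to
`exit_R(I)`, i.e. that `i` is drawn at a moment when the set of already drawn
balls belongs to the ideal `I`. -/
noncomputable def exitProb (w : ι → ℝ) (R : Finset ι) (I : Finset (Finset ι)) (i : ι) : ℝ :=
  ∑ l ∈ R.toList.permutations.toFinset,
    if (l.take (l.idxOf i)).toFinset ∈ I then listProb w l else 0

section UrnProcess

variable {w : ι → ℝ} {S R X : Finset ι} {l : List ι} {i j : ι}

noncomputable def drawOrders (S : Finset ι) : Finset (List ι) := S.toList.permutations.toFinset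

lemma mem_drawOrders : l ∈ drawOrders S ↔ l.Nodup ∧ l.toFinset = S := by
  simp only [drawOrders, List.mem_toFinset, List.mem_permutations]
  refine ⟨fun h => ⟨h.nodup_iff.mpr S.nodup_toList, by ext; simp [h.mem_iff]⟩, ?_⟩
  rintro ⟨hl, rfl⟩
  exact List.perm_of_nodup_nodup_toFinset_eq hl l.toFinset.nodup_toList (by simp)

lemma sum_map_eq_sum_of_mem_drawOrders (hl : l ∈ drawOrders S) :
    (l.map w).sum = ∑ k ∈ S, w k := by
  obtain ⟨hnd, rfl⟩ := mem_drawOrders.mp hl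
  exact (List.sum_toFinset w hnd).symm

lemma cons_mem_drawOrders (hj : j ∈ S) (hl : l ∈ drawOrders (S.erase j)) :
    j :: l ∈ drawOrders S := by
  obtain ⟨hnd, hlS⟩ := mem_drawOrders.mp hl
  have hjl : j ∉ l := fun h => notMem_erase j S (hlS ▸ List.mem_toFinset.mpr h)
  refine mem_drawOrders.mpr ⟨List.nodup_cons.mpr ⟨hjl, hnd⟩, ?_⟩
  rw [List.toFinset_cons, hlS, insert_erase hj]

lemma filter_head_drawOrders (hj : j ∈ S) :
    (drawOrders S).filter (·.head? = some j) = (drawOrders (S.erase j)).image (j :: ·) := by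
  ext l
  simp only [mem_filter, mem_image, mem_drawOrders]
  constructor
  · rintro ⟨⟨hl, rfl⟩, hhead⟩
    obtain ⟨t, rfl⟩ : ∃ t, l = j :: t := by
      cases l with
      | nil => simp at hhead
      | cons a t => simp_all
    rw [List.nodup_cons] at hl
    exact ⟨t, ⟨hl.2, by simp [hl.1]⟩, rfl⟩
  · rintro ⟨t, ht, rfl⟩
    exact ⟨mem_drawOrders.mp (cons_mem_drawOrders hj (mem_drawOrders.mpr ht)), rfl⟩

lemma sum_listProb_filter_head (hj : j ∈ S) :
    ∑ l ∈ (drawOrders S).filter (·.head? = some j), listProb w l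
      = (w j / ∑ k ∈ S, w k) * ∑ t ∈ drawOrders (S.erase j), listProb w t := by
  rw [filter_head_drawOrders hj, sum_image List.cons_injective.injOn, mul_sum]
  refine sum_congr rfl fun t ht => ?_
  rw [listProb, sum_map_eq_sum_of_mem_drawOrders (cons_mem_drawOrders hj ht)]

lemma sum_listProb_drawOrders (hw : ∀ k ∈ S, 0 < w k) : ∑ l ∈ drawOrders S, listProb w l = 1 := by
  induction S using Finset.strongInduction with
  | _ S ih =>
    rcases S.eq_empty_or_nonempty with rfl | hS
    · simp [drawOrders, listProb]
    have hhead : ∀ l ∈ drawOrders S, l.head? ∈ S.image some := by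
      intro l hl
      obtain ⟨hnd, rfl⟩ := mem_drawOrders.mp hl
      cases l with
      | nil => simp at hS
      | cons a t => simp
    have hfiber : ∀ j ∈ S, ∑ l ∈ (drawOrders S).filter (·.head? = some j), listProb w l
        = w j / ∑ k ∈ S, w k := fun j hj => by
      rw [sum_listProb_filter_head hj,
        ih _ (erase_ssubset hj) fun k hk => hw k (mem_of_mem_erase hk), mul_one]
    rw [← sum_fiberwise_of_maps_to hhead, sum_image (Option.some_injective _).injOn,
      sum_congr rfl hfiber, ← sum_div, div_self (sum_pos hw hS).ne']

/-- The probability that the urn process starts by drawing the balls of `p` in order, when the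
balls not in `p` have total weight `c`. -/
noncomputable def prefixProb (w : ι → ℝ) (c : ℝ) : List ι → ℝ
  | [] => 1
  | i :: l => w i / (((i :: l).map w).sum + c) * prefixProb w c l

omit [DecidableEq ι] in
lemma listProb_append (w : ι → ℝ) (p s : List ι) :
    listProb w (p ++ s) = prefixProb w (s.map w).sum p * listProb w s := by
  induction p with
  | nil => simp [prefixProb]
  | cons a t ih =>
    simp only [List.cons_append, listProb, ih, prefixProb, List.map_cons, List.sum_cons,
      List.map_append, List.sum_append, add_assoc, mul_assoc]

lemma filter_take_drawOrders (hXR : X ⊆ R) :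
    (drawOrders R).filter (fun l => (l.take #X).toFinset = X)
      = (drawOrders X ×ˢ drawOrders (R \ X)).image (fun q => q.1 ++ q.2) := by
  ext l
  simp only [mem_filter, mem_image, mem_product, mem_drawOrders, Prod.exists]
  constructor
  · rintro ⟨⟨hnd, rfl⟩, hX⟩
    have hsplit := List.take_append_drop #X l
    obtain ⟨hnd₁, hnd₂, hdisj⟩ := List.nodup_append'.mp (hsplit ▸ hnd)
    replace hdisj := List.disjoint_toFinset_iff_disjoint.mpr hdisj
    rw [hX] at hdisj
    refine ⟨_, _, ⟨⟨hnd₁, hX⟩, hnd₂, ?_⟩, hsplit⟩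
    conv_rhs => rw [← hsplit]
    rw [List.toFinset_append, hX, union_sdiff_cancel_left hdisj]
  · rintro ⟨p, s, ⟨⟨hp, hpX⟩, hs, hsX⟩, rfl⟩
    have hdisj : Disjoint p.toFinset s.toFinset := by
      rw [hpX, hsX]
      exact disjoint_sdiff
    have hlen : p.length = #X := by rw [← hpX, List.toFinset_card_of_nodup hp]
    refine ⟨⟨List.nodup_append'.mpr ⟨hp, hs, List.disjoint_toFinset_iff_disjoint.mp hdisj⟩, ?_⟩, ?_⟩
    · rw [List.toFinset_append, hpX, hsX, union_sdiff_of_subset hXR]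
    · rw [← hlen, List.take_left, hpX]

lemma sum_listProb_filter_take (hXR : X ⊆ R) (G : List ι → ℝ) :
    ∑ l ∈ (drawOrders R).filter (fun l => (l.take #X).toFinset = X), listProb w l * G (l.drop #X)
      = (∑ p ∈ drawOrders X, prefixProb w (∑ k ∈ R \ X, w k) p)
          * ∑ s ∈ drawOrders (R \ X), listProb w s * G s := by
  have hinj : Set.InjOn (fun q : List ι × List ι => q.1 ++ q.2)
      ↑(drawOrders X ×ˢ drawOrders (R \ X)) := by
    rintro ⟨p, s⟩ hq ⟨p', s'⟩ hq' heq
    simp only [mem_coe, mem_product, mem_drawOrders] at hq hq'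
    have hlen : p.length = p'.length := by
      rw [← List.toFinset_card_of_nodup hq.1.1, ← List.toFinset_card_of_nodup hq'.1.1, hq.1.2,
        hq'.1.2]
    exact Prod.ext_iff.mpr (List.append_inj heq hlen)
  rw [filter_take_drawOrders hXR, sum_image hinj, sum_product, sum_mul_sum]
  refine sum_congr rfl fun p hp => sum_congr rfl fun s hs => ?_
  have hlen : p.length = #X := by
    obtain ⟨hnd, rfl⟩ := mem_drawOrders.mp hp
    exact (List.toFinset_card_of_nodup hnd).symm
  rw [← hlen, List.drop_left, listProb_append, sum_map_eq_sum_of_mem_drawOrders hs, mul_assoc]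

lemma urnPr_eq_sum_prefixProb (hw : ∀ k ∈ R, 0 < w k) (hXR : X ⊆ R) :
    urnPr w R X = ∑ p ∈ drawOrders X, prefixProb w (∑ k ∈ R \ X, w k) p := by
  have h := sum_listProb_filter_take (w := w) hXR fun _ => 1
  simp only [mul_one] at h
  rw [urnPr, ← sum_filter, ← drawOrders, h,
    sum_listProb_drawOrders fun k hk => hw k (mem_sdiff.mp hk).1, mul_one]

lemma take_idxOf_toFinset_eq_iff (hl : l.Nodup) (hi : i ∈ l) :
    (l.take (l.idxOf i)).toFinset = X ↔ (l.take #X).toFinset = X ∧ (l.drop #X).head? = some i := by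
  have hidx : l.idxOf i < l.length := List.idxOf_lt_length_iff.mpr hi
  rw [List.head?_drop]
  constructor
  · rintro rfl
    rw [List.toFinset_card_of_nodup (hl.sublist (List.take_sublist _ _)), List.length_take,
      min_eq_left hidx.le, List.getElem?_eq_getElem hidx, List.getElem_idxOf]
    exact ⟨rfl, rfl⟩
  · rintro ⟨hX, hget⟩
    obtain ⟨hlt, rfl⟩ := List.getElem?_eq_some_iff.mp hget
    rwa [hl.idxOf_getElem]

lemma notMem_take_idxOf (l : List ι) (i : ι) : i ∉ l.take (l.idxOf i) := by
  induction l with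
  | nil => simp
  | cons a t ih =>
    by_cases h : a = i
    · simp [h]
    · simp [List.idxOf_cons_ne _ h, ih, Ne.symm h]

lemma sum_listProb_filter_take_idxOf (hw : ∀ k ∈ R, 0 < w k) (hXR : X ⊆ R) (hi : i ∈ R)
    (hiX : i ∉ X) :
    ∑ l ∈ (drawOrders R).filter (fun l => (l.take (l.idxOf i)).toFinset = X), listProb w l
      = w i * urnPr w R X / ∑ k ∈ R \ X, w k := by
  have hevent : (drawOrders R).filter (fun l => (l.take (l.idxOf i)).toFinset = X)
      = ((drawOrders R).filter (fun l => (l.take #X).toFinset = X)).filter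
          (fun l => (l.drop #X).head? = some i) := by
    rw [filter_filter]
    refine filter_congr fun l hl => ?_
    obtain ⟨hnd, rfl⟩ := mem_drawOrders.mp hl
    exact take_idxOf_toFinset_eq_iff hnd (List.mem_toFinset.mp hi)
  have hsplit := sum_listProb_filter_take (w := w) hXR fun s => if s.head? = some i then 1 else 0
  simp only [mul_ite, mul_one, mul_zero] at hsplit
  rw [hevent, sum_filter, hsplit, ← sum_filter, sum_listProb_filter_head (mem_sdiff.mpr ⟨hi, hiX⟩),
    sum_listProb_drawOrders fun k hk => hw k (mem_sdiff.mp (mem_of_mem_erase hk)).1,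
    urnPr_eq_sum_prefixProb hw hXR]
  ring

end UrnProcess

theorem exitProb_eq_sum_general
    (w : ι → ℝ) (R : Finset ι) (hw : ∀ i ∈ R, 0 < w i)
    (I : Finset (Finset ι)) (hIsub : ∀ X ∈ I, X ⊆ R)
    (i : ι) (hi : i ∈ R) :
    exitProb w R I i =
      ∑ X ∈ I.filter (fun X => i ∉ X), w i * urnPr w R X / ∑ j ∈ R \ X, w j := by
  have hexit : ∀ l : List ι, (l.take (l.idxOf i)).toFinset ∈ I.filter (fun X => i ∉ X)
      ↔ (l.take (l.idxOf i)).toFinset ∈ I := fun l => by simp [notMem_take_idxOf]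
  calc exitProb w R I i
      = ∑ l ∈ (drawOrders R).filter
          (fun l => (l.take (l.idxOf i)).toFinset ∈ I.filter (fun X => i ∉ X)), listProb w l := by
        simp only [hexit, sum_filter]
        rfl
    _ = ∑ X ∈ I.filter (fun X => i ∉ X),
          ∑ l ∈ (drawOrders R).filter (fun l => (l.take (l.idxOf i)).toFinset = X), listProb w l :=
        (sum_fiberwise_eq_sum_filter _ _ _ _).symm
    _ = _ := sum_congr rfl fun X hX =>
        sum_listProb_filter_take_idxOf hw (hIsub X (mem_filter.mp hX).1) hi (mem_filter.mp hX).2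

/-- the probability that ball `i` belongs to `exit_R(I)` equals
`∑_{X ∈ I, i ∉ X} w(i)·Pr_R(X)/w(∁X)`. -/
theorem exitProb_eq_sum
    (w : ι → ℝ) (R : Finset ι) (hw : ∀ i ∈ R, 0 < w i)
    (I : Finset (Finset ι)) (hIsub : ∀ X ∈ I, X ⊆ R)
    (hIdeal : ∀ X ∈ I, ∀ Y, Y ⊆ X → Y ∈ I)
    (hbot : ∅ ∈ I) (htop : R ∉ I) (i : ι) (hi : i ∈ R) :
    exitProb w R I i =
      ∑ X ∈ I.filter (fun X => i ∉ X), w i * urnPr w R X / ∑ j ∈ R \ X, w j :=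
  exitProb_eq_sum_general w R hw I hIsub i hi
end
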